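/- arXiv:2410.04037 — 7 statements merged into one kernel-verified Lean document; each statement's English description precedes it below -/
import Mathlib

section
/- Let a < b be real numbers. Let λ : ℝ → ℝ be continuously differentiable and strictly positive on [a,b], and let λ_θ : ℝ → ℝ be twice continuously differentiable and strictly positive on [a,b]. Define q(t) = λ(t)·exp(−∫_a^t λ(s) ds), ψ(t) = λ'(t)/λ(t) − λ(t), and ψ_θ(t) = λ_θ'(t)/λ_θ(t) − λ_θ(t). Then (1/2)·∫_a^b q(t)·(ψ(t) − ψ_θ(t))² dt = ∫_a^b q(t)·((1/2)·ψ_θ(t)² + ψ_θ'(t)) dt + (1/2)·∫_a^b q(t)·ψ(t)² dt + q(a)·ψ_θ(a) − q(b)·ψ_θ(b). In particular, the explicit score-matching objective (left-hand side) differs from the implicit one (first term on the right) by a constant not depending on λ_θ only when the two boundary terms q(a)·ψ_θ(a) − q(b)·ψ_θ(b) do not depend on λ_θ. -/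
/-!
Since `q' = q ψ`, i.e. `ψ` is the score of `q`, expanding the square leaves the cross term
`∫ q ψ ψθ = ∫ q' ψθ`, which integrates by parts to `q ψθ |_a^b - ∫ q ψθ'`. The boundary term
is where the two objectives stop being equivalent.
-/

open MeasureTheory Real Set intervalIntegral

theorem continuousOn_primitive_Icc {f : ℝ → ℝ} {a b : ℝ} (hab : a ≤ b)
    (hf : ContinuousOn f (Icc a b)) :
    ContinuousOn (fun t ↦ ∫ s in a..t, f s) (Icc a b) := by
  rw [← uIcc_of_le hab] at hf ⊢
  exact continuousOn_primitive_interval hf.integrableOn_uIcc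

theorem hasDerivAt_primitive_of_mem_Ioo {f : ℝ → ℝ} {a b t : ℝ}
    (hf : ContinuousOn f (Icc a b)) (ht : t ∈ Ioo a b) :
    HasDerivAt (fun u ↦ ∫ s in a..u, f s) (f t) t :=
  integral_hasDerivAt_right
    ((hf.mono (Icc_subset_Icc_right ht.2.le)).intervalIntegrable_of_Icc ht.1.le)
    ((hf.mono Ioo_subset_Icc_self).stronglyMeasurableAtFilter isOpen_Ioo t ht)
    (hf.continuousAt (Icc_mem_nhds ht.1 ht.2))

theorem HasDerivAt.mul_exp_neg {f F : ℝ → ℝ} {f' t : ℝ}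
    (hf : HasDerivAt f f' t) (hF : HasDerivAt F (f t) t) (hf0 : f t ≠ 0) :
    HasDerivAt (fun u ↦ f u * Real.exp (-F u)) (f t * Real.exp (-F t) * (f' / f t - f t)) t := by
  refine (hf.mul hF.fun_neg.exp).congr_deriv ?_
  field_simp
  ring

theorem HasDerivAt.div_sub_self {f f' : ℝ → ℝ} {f'' t : ℝ}
    (hf : HasDerivAt f (f' t) t) (hf' : HasDerivAt f' f'' t) (hf0 : f t ≠ 0) :
    HasDerivAt (fun u ↦ f' u / f u - f u) (f'' / f t - (f' t / f t) ^ 2 - f' t) t := by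
  refine ((hf'.div hf hf0).sub hf).congr_deriv ?_
  field_simp

theorem half_integral_mul_sub_sq_eq {q ψ φ φ' : ℝ → ℝ} {a b : ℝ} (hab : a ≤ b)
    (hq : ContinuousOn q (Icc a b)) (hψ : ContinuousOn ψ (Icc a b))
    (hφ : ContinuousOn φ (Icc a b)) (hφ' : ContinuousOn φ' (Icc a b))
    (hq_deriv : ∀ t ∈ Ioo a b, HasDerivAt q (q t * ψ t) t)
    (hφ_deriv : ∀ t ∈ Ioo a b, HasDerivAt φ (φ' t) t) :
    (1/2) * ∫ t in a..b, q t * (ψ t - φ t) ^ 2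
      = (∫ t in a..b, q t * ((1/2) * φ t ^ 2 + φ' t))
        + (1/2) * (∫ t in a..b, q t * ψ t ^ 2) + q a * φ a - q b * φ b := by
  have hint {g : ℝ → ℝ} (hg : ContinuousOn g (Icc a b)) : IntervalIntegrable g volume a b :=
    hg.intervalIntegrable_of_Icc hab
  have hIcc : uIcc a b = Icc a b := uIcc_of_le hab
  have hIoo : Ioo (min a b) (max a b) = Ioo a b := by rw [min_eq_left hab, max_eq_right hab]
  have hparts : ∫ t in a..b, q t * ψ t * φ t + q t * φ' t = q b * φ b - q a * φ a :=
    integral_deriv_mul_eq_sub_of_hasDerivAt (hIcc ▸ hq) (hIcc ▸ hφ) (hIoo ▸ hq_deriv)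
      (hIoo ▸ hφ_deriv) (hint (hq.mul hψ)) (hint hφ')
  calc (1/2) * ∫ t in a..b, q t * (ψ t - φ t) ^ 2
      = ∫ t in a..b, (q t * ((1/2) * φ t ^ 2 + φ' t) + (1/2) * (q t * ψ t ^ 2))
          - (q t * ψ t * φ t + q t * φ' t) := by
        rw [← intervalIntegral.integral_const_mul]
        congr 1 with t
        ring
    _ = _ := by
        rw [integral_sub (hint (by fun_prop)) (hint (by fun_prop)),
          integral_add (hint (by fun_prop)) (hint (by fun_prop)),
          intervalIntegral.integral_const_mul, hparts]
        ring

/-- Single-conditional relation between explicit and implicit (autoregressive)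
score matching.  With `q t = lam t * exp (-∫_a^t lam)`, data score
`ψ t = lam' t / lam t - lam t`, model score `ψθ t = lamθ' t / lamθ t - lamθ t`
(whose derivative is `lamθ'' t / lamθ t - (lamθ' t / lamθ t)^2 - lamθ' t`), we have
`(1/2)∫ q (ψ - ψθ)² = ∫ q ((1/2)ψθ² + ψθ') + (1/2)∫ q ψ² + q(a)ψθ(a) - q(b)ψθ(b)`. -/
theorem stmt_3 (a b : ℝ) (hab : a < b)
    (lam lam' lamθ lamθ' lamθ'' : ℝ → ℝ)
    (hlam : ∀ t ∈ Set.Icc a b, HasDerivAt lam (lam' t) t)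
    (hlam'c : ContinuousOn lam' (Set.Icc a b))
    (hlampos : ∀ t ∈ Set.Icc a b, 0 < lam t)
    (hlamθ : ∀ t ∈ Set.Icc a b, HasDerivAt lamθ (lamθ' t) t)
    (hlamθ' : ∀ t ∈ Set.Icc a b, HasDerivAt lamθ' (lamθ'' t) t)
    (hlamθ''c : ContinuousOn lamθ'' (Set.Icc a b))
    (hlamθpos : ∀ t ∈ Set.Icc a b, 0 < lamθ t) :
    (1/2) * ∫ t in a..b,
        (lam t * Real.exp (-(∫ s in a..t, lam s))) *
          ((lam' t / lam t - lam t) - (lamθ' t / lamθ t - lamθ t))^2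
    = (∫ t in a..b,
        (lam t * Real.exp (-(∫ s in a..t, lam s))) *
          ((1/2) * (lamθ' t / lamθ t - lamθ t)^2
            + (lamθ'' t / lamθ t - (lamθ' t / lamθ t)^2 - lamθ' t)))
      + (1/2) * (∫ t in a..b,
          (lam t * Real.exp (-(∫ s in a..t, lam s))) * (lam' t / lam t - lam t)^2)
      + (lam a * Real.exp (-(∫ s in a..a, lam s))) * (lamθ' a / lamθ a - lamθ a)
      - (lam b * Real.exp (-(∫ s in a..b, lam s))) * (lamθ' b / lamθ b - lamθ b) := by
  have hlamc : ContinuousOn lam (Icc a b) := HasDerivAt.continuousOn hlam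
  have hlamθc : ContinuousOn lamθ (Icc a b) := HasDerivAt.continuousOn hlamθ
  have hlamθ'c : ContinuousOn lamθ' (Icc a b) := HasDerivAt.continuousOn hlamθ'
  have hlam0 : ∀ t ∈ Icc a b, lam t ≠ 0 := fun t ht ↦ (hlampos t ht).ne'
  have hlamθ0 : ∀ t ∈ Icc a b, lamθ t ≠ 0 := fun t ht ↦ (hlamθpos t ht).ne'
  have hdensity : ContinuousOn (fun t ↦ lam t * Real.exp (-∫ s in a..t, lam s)) (Icc a b) :=
    hlamc.mul (continuous_exp.comp_continuousOn (continuousOn_primitive_Icc hab.le hlamc).neg)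
  refine half_integral_mul_sub_sq_eq hab.le hdensity ((hlam'c.div hlamc hlam0).sub hlamc)
    ((hlamθ'c.div hlamθc hlamθ0).sub hlamθc)
    (((hlamθ''c.div hlamθc hlamθ0).sub ((hlamθ'c.div hlamθc hlamθ0).pow 2)).sub hlamθ'c)
    (fun t ht ↦ ?_) (fun t ht ↦ ?_)
  · have ht' := Ioo_subset_Icc_self ht
    exact (hlam t ht').mul_exp_neg (hasDerivAt_primitive_of_mem_Ioo hlamc ht) (hlam0 t ht')
  · have ht' := Ioo_subset_Icc_self ht
    exact (hlamθ t ht').div_sub_self (hlamθ' t ht') (hlamθ0 t ht')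
end

section
/- Let a < b be real numbers. Let λ : ℝ → ℝ be continuously differentiable and strictly positive on [a,b], let λ_θ : ℝ → ℝ be twice continuously differentiable and strictly positive on [a,b], and let h : ℝ → ℝ be continuously differentiable on [a,b] with h(a) = 0 and h(b) = 0. Define q(t) = λ(t)·exp(−∫_a^t λ(s) ds), ψ(t) = λ'(t)/λ(t) − λ(t), and ψ_θ(t) = λ_θ'(t)/λ_θ(t) − λ_θ(t). Then (1/2)·∫_a^b q(t)·(ψ(t) − ψ_θ(t))²·h(t) dt = ∫_a^b q(t)·((1/2)·ψ_θ(t)²·h(t) + ψ_θ'(t)·h(t) + ψ_θ(t)·h'(t)) dt + (1/2)·∫_a^b q(t)·ψ(t)²·h(t) dt; in particular the explicit weighted objective equals the implicit weighted objective plus a term not depending on λ_θ, with no boundary terms. -/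
/-!
The conditional density `q = λ exp (-∫ₐᵗ λ)` satisfies `q' = q ψ`, i.e. `ψ` is its logarithmic
derivative. Expanding `(ψ - ψθ)²`, the only term of the explicit objective that couples the
unknown `ψ` with the model is the cross term `-∫ q ψ ψθ h = -∫ q' ψθ h`; integrating by parts
turns it into `∫ q (ψθ h)'`, and the boundary term vanishes because `h(a) = h(b) = 0`.
-/

open MeasureTheory Real Set intervalIntegral
open scoped Interval

noncomputable section

/-- The paper's `q`: density of the next event on `[a, b]` given the last event at `a`. -/
def hazardDensity (lam : ℝ → ℝ) (a t : ℝ) : ℝ := lam t * exp (-∫ s in a..t, lam s)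

def hazardScore (lam lam' : ℝ → ℝ) (t : ℝ) : ℝ := lam' t / lam t - lam t

end

section HazardCalculus

variable {a b t : ℝ} {lam lam' lam'' : ℝ → ℝ}

theorem continuousOn_hazardDensity (hlam : ContinuousOn lam [[a, b]]) :
    ContinuousOn (hazardDensity lam a) [[a, b]] :=
  hlam.mul (continuous_exp.comp_continuousOn
    (continuousOn_primitive_interval (hlam.integrableOn_compact isCompact_uIcc)).neg)

theorem continuousOn_hazardScore (hlam : ContinuousOn lam [[a, b]])
    (hlam' : ContinuousOn lam' [[a, b]]) (hne : ∀ t ∈ [[a, b]], lam t ≠ 0) :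
    ContinuousOn (hazardScore lam lam') [[a, b]] :=
  (hlam'.div hlam hne).sub hlam

theorem hasDerivAt_hazardDensity (hlam : ContinuousOn lam [[a, b]])
    (ht : t ∈ Ioo (min a b) (max a b)) (hderiv : HasDerivAt lam (lam' t) t) (hne : lam t ≠ 0) :
    HasDerivAt (hazardDensity lam a) (hazardDensity lam a t * hazardScore lam lam' t) t := by
  have hint : IntervalIntegrable lam volume a t :=
    (hlam.mono (uIcc_subset_uIcc left_mem_uIcc (Ioo_subset_Icc_self ht))).intervalIntegrable
  have hprimitive : HasDerivAt (fun u => ∫ s in a..u, lam s) (lam t) t :=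
    integral_hasDerivAt_right hint
      ((hlam.mono Ioo_subset_Icc_self).stronglyMeasurableAtFilter isOpen_Ioo t ht)
      hderiv.continuousAt
  refine (hderiv.mul hprimitive.neg.exp).congr_deriv ?_
  simp only [hazardDensity, hazardScore, Pi.neg_apply]
  field_simp
  ring

theorem hasDerivAt_hazardScore (hderiv : HasDerivAt lam (lam' t) t)
    (hderiv' : HasDerivAt lam' (lam'' t) t) (hne : lam t ≠ 0) :
    HasDerivAt (hazardScore lam lam') (lam'' t / lam t - (lam' t / lam t) ^ 2 - lam' t) t := by
  refine ((hderiv'.div hderiv hne).sub hderiv).congr_deriv ?_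
  field_simp

end HazardCalculus

section ScoreMatching

variable {a b : ℝ} {q ψ φ φ' H H' : ℝ → ℝ}

theorem integral_mul_score_mul_eq_neg {g g' : ℝ → ℝ}
    (hq : ContinuousOn q [[a, b]]) (hψ : ContinuousOn ψ [[a, b]])
    (hg : ContinuousOn g [[a, b]]) (hg' : ContinuousOn g' [[a, b]])
    (hq_deriv : ∀ t ∈ Ioo (min a b) (max a b), HasDerivAt q (q t * ψ t) t)
    (hg_deriv : ∀ t ∈ Ioo (min a b) (max a b), HasDerivAt g (g' t) t)
    (hga : g a = 0) (hgb : g b = 0) :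
    ∫ t in a..b, q t * ψ t * g t = -∫ t in a..b, q t * g' t := by
  have hparts := integral_deriv_mul_eq_sub_of_hasDerivAt hq hg hq_deriv hg_deriv
    ((hq.mul hψ).intervalIntegrable) hg'.intervalIntegrable
  have hleft : IntervalIntegrable (fun t => q t * ψ t * g t) volume a b :=
    ((hq.mul hψ).mul hg).intervalIntegrable
  have hright : IntervalIntegrable (fun t => q t * g' t) volume a b :=
    (hq.mul hg').intervalIntegrable
  rw [intervalIntegral.integral_add hleft hright, hga, hgb] at hparts
  linarith

theorem integral_mul_sq_sub_mul_eq
    (hq : ContinuousOn q [[a, b]]) (hψ : ContinuousOn ψ [[a, b]])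
    (hφ : ContinuousOn φ [[a, b]]) (hφ' : ContinuousOn φ' [[a, b]])
    (hH : ContinuousOn H [[a, b]]) (hH' : ContinuousOn H' [[a, b]])
    (hq_deriv : ∀ t ∈ Ioo (min a b) (max a b), HasDerivAt q (q t * ψ t) t)
    (hφ_deriv : ∀ t ∈ Ioo (min a b) (max a b), HasDerivAt φ (φ' t) t)
    (hH_deriv : ∀ t ∈ Ioo (min a b) (max a b), HasDerivAt H (H' t) t)
    (hHa : H a = 0) (hHb : H b = 0) :
    (1/2) * ∫ t in a..b, q t * ((ψ t - φ t) ^ 2 * H t)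
      = (∫ t in a..b, q t * ((1/2) * φ t ^ 2 * H t + φ' t * H t + φ t * H' t))
        + (1/2) * ∫ t in a..b, q t * (ψ t ^ 2 * H t) := by
  have hcross := integral_mul_score_mul_eq_neg (g := fun t => φ t * H t)
    (g' := fun t => φ' t * H t + φ t * H' t) hq hψ (hφ.mul hH)
    ((hφ'.mul hH).add (hφ.mul hH'))
    hq_deriv (fun t ht => (hφ_deriv t ht).mul (hH_deriv t ht))
    (by simp [hHa]) (by simp [hHb])
  have hexpand : ∀ t, q t * ((ψ t - φ t) ^ 2 * H t)
      = q t * (ψ t ^ 2 * H t) + 2 * (q t * ((1/2) * φ t ^ 2 * H t))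
        - 2 * (q t * ψ t * (φ t * H t)) := fun t => by ring
  have hsplit : ∀ t, q t * ((1/2) * φ t ^ 2 * H t + φ' t * H t + φ t * H' t)
      = q t * ((1/2) * φ t ^ 2 * H t) + q t * (φ' t * H t + φ t * H' t) := fun t => by ring
  have hintegrable : ∀ {f : ℝ → ℝ}, ContinuousOn f [[a, b]] → IntervalIntegrable f volume a b :=
    ContinuousOn.intervalIntegrable
  simp_rw [hexpand, hsplit]
  rw [intervalIntegral.integral_sub, intervalIntegral.integral_add,
    intervalIntegral.integral_const_mul, intervalIntegral.integral_const_mul, hcross,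
    intervalIntegral.integral_add]
  · ring
  all_goals exact hintegrable (by fun_prop)

end ScoreMatching

/-- Single-conditional equivalence between explicit and implicit weighted
(autoregressive) score matching.  With a weight `h` vanishing at both endpoints,
`(1/2)∫ q (ψ - ψθ)² h = ∫ q ((1/2)ψθ² h + ψθ' h + ψθ h') + (1/2)∫ q ψ² h`,
with no boundary terms; here `q t = lam t * exp (-∫_a^t lam)`,
`ψ t = lam' t / lam t - lam t`, `ψθ t = lamθ' t / lamθ t - lamθ t` and
`ψθ' t = lamθ'' t / lamθ t - (lamθ' t / lamθ t)^2 - lamθ' t`. -/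
theorem stmt_4 (a b : ℝ) (hab : a < b)
    (lam lam' lamθ lamθ' lamθ'' h h' : ℝ → ℝ)
    (hlam : ∀ t ∈ Set.Icc a b, HasDerivAt lam (lam' t) t)
    (hlam'c : ContinuousOn lam' (Set.Icc a b))
    (hlampos : ∀ t ∈ Set.Icc a b, 0 < lam t)
    (hlamθ : ∀ t ∈ Set.Icc a b, HasDerivAt lamθ (lamθ' t) t)
    (hlamθ' : ∀ t ∈ Set.Icc a b, HasDerivAt lamθ' (lamθ'' t) t)
    (hlamθ''c : ContinuousOn lamθ'' (Set.Icc a b))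
    (hlamθpos : ∀ t ∈ Set.Icc a b, 0 < lamθ t)
    (hh : ∀ t ∈ Set.Icc a b, HasDerivAt h (h' t) t)
    (hh'c : ContinuousOn h' (Set.Icc a b))
    (hha : h a = 0) (hhb : h b = 0) :
    (1/2) * ∫ t in a..b,
        (lam t * Real.exp (-(∫ s in a..t, lam s))) *
          (((lam' t / lam t - lam t) - (lamθ' t / lamθ t - lamθ t))^2 * h t)
    = (∫ t in a..b,
        (lam t * Real.exp (-(∫ s in a..t, lam s))) *
          ((1/2) * (lamθ' t / lamθ t - lamθ t)^2 * h t
            + (lamθ'' t / lamθ t - (lamθ' t / lamθ t)^2 - lamθ' t) * h t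
            + (lamθ' t / lamθ t - lamθ t) * h' t))
      + (1/2) * (∫ t in a..b,
          (lam t * Real.exp (-(∫ s in a..t, lam s))) * ((lam' t / lam t - lam t)^2 * h t)) := by
  rw [← uIcc_of_le hab.le] at hlam hlam'c hlampos hlamθ hlamθ' hlamθ''c hlamθpos hh hh'c
  have hlamne : ∀ t ∈ [[a, b]], lam t ≠ 0 := fun t ht => (hlampos t ht).ne'
  have hlamθne : ∀ t ∈ [[a, b]], lamθ t ≠ 0 := fun t ht => (hlamθpos t ht).ne'
  have hlamc : ContinuousOn lam [[a, b]] := HasDerivAt.continuousOn hlam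
  have hlamθc : ContinuousOn lamθ [[a, b]] := HasDerivAt.continuousOn hlamθ
  have hlamθ'c : ContinuousOn lamθ' [[a, b]] := HasDerivAt.continuousOn hlamθ'
  exact integral_mul_sq_sub_mul_eq (continuousOn_hazardDensity hlamc)
    (continuousOn_hazardScore hlamc hlam'c hlamne)
    (continuousOn_hazardScore hlamθc hlamθ'c hlamθne)
    (((hlamθ''c.div hlamθc hlamθne).sub ((hlamθ'c.div hlamθc hlamθne).pow 2)).sub hlamθ'c)
    (HasDerivAt.continuousOn hh) hh'c
    (fun t ht => hasDerivAt_hazardDensity hlamc ht (hlam t (mem_Icc_of_Ioo ht))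
      (hlamne t (mem_Icc_of_Ioo ht)))
    (fun t ht => hasDerivAt_hazardScore (hlamθ t (mem_Icc_of_Ioo ht))
      (hlamθ' t (mem_Icc_of_Ioo ht)) (hlamθne t (mem_Icc_of_Ioo ht)))
    (fun t ht => hh t (mem_Icc_of_Ioo ht)) hha hhb
end

section
/- Let N ≥ 1, T > 0, and let S_N = {t ∈ ℝ^N : 0 ≤ t_1 ≤ t_2 ≤ ⋯ ≤ t_N ≤ T} be the ordered simplex, with S_{N−1} the corresponding ordered simplex in ℝ^{N−1}. Let p : ℝ^N → ℝ be continuously differentiable and let g : ℝ → ℝ be continuously differentiable. Then ∑_{n=1}^N ∫_{S_N} (∂p/∂t_n)(t)·g(t_n) dt = g(T)·∫_{S_{N−1}} p(s_1,…,s_{N−1},T) ds − g(0)·∫_{S_{N−1}} p(0,s_1,…,s_{N−1}) ds − ∫_{S_N} p(t)·(∑_{n=1}^N g'(t_n)) dt, where for N = 1 the two (N−1)-dimensional integrals are interpreted as p(T) and p(0) respectively (integration over the one-point space ℝ^0 with unit measure). In particular, after coordinatewise integration by parts over the simplex, all interior boundary terms at the facets {t_n = t_{n+1}} cancel in pairs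 and only the facets {t_1 = 0} and {t_N = T} contribute. -/
open MeasureTheory Real Set

/-- The ordered simplex `S_N = {t ∈ ℝ^N : 0 ≤ t 1 ≤ ⋯ ≤ t N ≤ T}`. -/
def ordSimplex (N : ℕ) (T : ℝ) : Set (Fin N → ℝ) :=
  {t | Monotone t ∧ ∀ i, t i ∈ Set.Icc 0 T}

/-!
Induction on the dimension, slicing off the last coordinate `τ = t_{N+1}` by Fubini's theorem,
taken in both orders. For `∂_{N+1} p`, integrating by parts in `τ ∈ [t_N, T]` produces the
facet `{t_{N+1} = T}` and the interior facet `{t_{N+1} = t_N}`. For `n ≤ N`, the formula in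
dimension `N` applied to `p (·, τ)` on `S_N(τ)` and integrated over `τ ∈ [0, T]` produces the
facet `{t_1 = 0}`; its upper facet `{t_N = τ}` is the same interior facet with the opposite sign,
so the two cancel.
-/

section SetFubini

variable {α β : Type*} [MeasurableSpace α] [MeasurableSpace β]
  {μ : Measure α} {ν : Measure β} [SFinite ν] {E : Set (α × β)} {f : α × β → ℝ}

theorem setIntegral_prod_eq_integral_setIntegral [SFinite μ] (hE : MeasurableSet E)
    (hf : IntegrableOn f E (μ.prod ν)) :
    ∫ z in E, f z ∂μ.prod ν = ∫ x, ∫ y in Prod.mk x ⁻¹' E, f (x, y) ∂ν ∂μ := by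
  rw [← integral_indicator hE, integral_prod _ (hf.integrable_indicator hE)]
  congr 1
  funext x
  rw [← integral_indicator (measurable_prodMk_left hE)]
  rfl

theorem setIntegral_prod_eq_integral_setIntegral_symm [SFinite μ] (hE : MeasurableSet E)
    (hf : IntegrableOn f E (μ.prod ν)) :
    ∫ z in E, f z ∂μ.prod ν = ∫ y, ∫ x in (·, y) ⁻¹' E, f (x, y) ∂μ ∂ν := by
  rw [← integral_indicator hE, integral_prod_symm _ (hf.integrable_indicator hE)]
  congr 1
  funext y
  rw [← integral_indicator (measurable_prodMk_right hE)]
  rfl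

theorem MeasureTheory.IntegrableOn.integrable_setIntegral_prod_left (hE : MeasurableSet E)
    (hf : IntegrableOn f E (μ.prod ν)) :
    Integrable (fun x ↦ ∫ y in Prod.mk x ⁻¹' E, f (x, y) ∂ν) μ := by
  convert (hf.integrable_indicator hE).integral_prod_left using 1
  funext x
  rw [← integral_indicator (measurable_prodMk_left hE)]
  rfl

theorem MeasureTheory.IntegrableOn.integrable_setIntegral_prod_right [SFinite μ]
    (hE : MeasurableSet E) (hf : IntegrableOn f E (μ.prod ν)) :
    Integrable (fun y ↦ ∫ x in (·, y) ⁻¹' E, f (x, y) ∂μ) ν := by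
  convert (hf.integrable_indicator hE).integral_prod_right using 1
  funext y
  rw [← integral_indicator (measurable_prodMk_right hE)]
  rfl

end SetFubini

theorem Fin.monotone_snoc_iff {α : Type*} [Preorder α] {n : ℕ} {s : Fin n → α} {a : α} :
    Monotone (Fin.snoc s a : Fin (n + 1) → α) ↔ Monotone s ∧ ∀ i, s i ≤ a := by
  refine ⟨fun h ↦ ⟨fun i j hij ↦ ?_, fun i ↦ ?_⟩, fun ⟨hs, ha⟩ i j hij ↦ ?_⟩
  · simpa using h (Fin.castSucc_le_castSucc_iff.2 hij)
  · simpa using h (Fin.le_last i.castSucc)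
  · induction j using Fin.lastCases with
    | last => induction i using Fin.lastCases <;> simp [ha]
    | cast j =>
      induction i using Fin.lastCases with
      | last => exact absurd hij (Fin.castSucc_lt_last j).not_ge
      | cast i => simpa using hs (Fin.castSucc_le_castSucc_iff.1 hij)

theorem Fin.monotone_cons_iff {α : Type*} [Preorder α] {n : ℕ} {s : Fin n → α} {a : α} :
    Monotone (Fin.cons a s : Fin (n + 1) → α) ↔ (∀ i, a ≤ s i) ∧ Monotone s := by
  rw [monotone_iff_forall_lt, monotone_iff_forall_lt]
  exact Fin.liftFun_cons (· ≤ ·)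

theorem continuous_snoc_const {N : ℕ} (τ : ℝ) :
    Continuous fun s : Fin N → ℝ ↦ (Fin.snoc s τ : Fin (N + 1) → ℝ) :=
  continuous_id.finSnoc (A := fun _ ↦ ℝ) continuous_const

section OrderedSimplex

variable {N : ℕ} {T τ : ℝ} {s : Fin N → ℝ}

theorem isClosed_ordSimplex (N : ℕ) (T : ℝ) : IsClosed (ordSimplex N T) := by
  rw [ordSimplex, ofPred_and, ofPred_forall]
  exact isClosed_monotone.inter <|
    isClosed_iInter fun i ↦ isClosed_Icc.preimage (continuous_apply i)

theorem isCompact_ordSimplex (N : ℕ) (T : ℝ) : IsCompact (ordSimplex N T) :=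
  (isCompact_univ_pi fun _ ↦ isCompact_Icc).of_isClosed_subset (isClosed_ordSimplex N T)
    fun _ ht i _ ↦ ht.2 i

theorem measurableSet_ordSimplex (N : ℕ) (T : ℝ) : MeasurableSet (ordSimplex N T) :=
  (isClosed_ordSimplex N T).measurableSet

theorem ContinuousOn.integrableOn_ordSimplex {f : (Fin N → ℝ) → ℝ}
    (hf : ContinuousOn f (ordSimplex N T)) : IntegrableOn f (ordSimplex N T) :=
  hf.integrableOn_compact (isCompact_ordSimplex N T)

theorem snoc_mem_ordSimplex_iff :
    (Fin.snoc s τ : Fin (N + 1) → ℝ) ∈ ordSimplex (N + 1) T ↔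
      s ∈ ordSimplex N τ ∧ τ ∈ Icc 0 T := by
  simp only [ordSimplex, mem_ofPred_eq, Fin.monotone_snoc_iff, Fin.forall_fin_succ',
    Fin.snoc_castSucc, Fin.snoc_last, mem_Icc]
  grind

noncomputable def lastOrZero (s : Fin N → ℝ) : ℝ :=
  (Fin.cons 0 s : Fin (N + 1) → ℝ) (Fin.last N)

theorem lastOrZero_snoc (s : Fin N → ℝ) (τ : ℝ) : lastOrZero (Fin.snoc s τ) = τ := by
  simp [lastOrZero, ← Fin.succ_last, Fin.cons_succ]

theorem continuous_lastOrZero : Continuous (lastOrZero : (Fin N → ℝ) → ℝ) :=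
  (continuous_apply _).comp (continuous_const.finCons continuous_id)

theorem lastOrZero_le_iff (hs : Monotone s) (h0 : ∀ i, 0 ≤ s i) :
    lastOrZero s ≤ τ ↔ 0 ≤ τ ∧ ∀ i, s i ≤ τ := by
  have hmono : Monotone (Fin.cons 0 s : Fin (N + 1) → ℝ) := Fin.monotone_cons_iff.2 ⟨h0, hs⟩
  have : lastOrZero s ≤ τ ↔ ∀ j, (Fin.cons 0 s : Fin (N + 1) → ℝ) j ≤ τ :=
    ⟨fun h j ↦ (hmono (Fin.le_last j)).trans h, fun h ↦ h _⟩
  simp only [this, Fin.forall_fin_succ, Fin.cons_zero, Fin.cons_succ]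

theorem lastOrZero_le_of_mem_ordSimplex (hT : 0 ≤ T) (hs : s ∈ ordSimplex N T) :
    lastOrZero s ≤ T :=
  (lastOrZero_le_iff hs.1 fun i ↦ (hs.2 i).1).2 ⟨hT, fun i ↦ (hs.2 i).2⟩

theorem snoc_mem_ordSimplex_iff_lastOrZero :
    (Fin.snoc s τ : Fin (N + 1) → ℝ) ∈ ordSimplex (N + 1) T ↔
      s ∈ ordSimplex N T ∧ τ ∈ Icc (lastOrZero s) T := by
  rw [snoc_mem_ordSimplex_iff]
  constructor
  · rintro ⟨⟨hs, hsτ⟩, hτ⟩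
    refine ⟨⟨hs, fun i ↦ ⟨(hsτ i).1, (hsτ i).2.trans hτ.2⟩⟩, ?_, hτ.2⟩
    exact (lastOrZero_le_iff hs fun i ↦ (hsτ i).1).2 ⟨hτ.1, fun i ↦ (hsτ i).2⟩
  · rintro ⟨⟨hs, hsT⟩, hτ, hτT⟩
    obtain ⟨hτ0, hsτ⟩ := (lastOrZero_le_iff hs fun i ↦ (hsT i).1).1 hτ
    exact ⟨⟨hs, fun i ↦ ⟨(hsT i).1, hsτ i⟩⟩, hτ0, hτT⟩

end OrderedSimplex

section Slicing

variable {N : ℕ} {T : ℝ} {F : (Fin (N + 1) → ℝ) → ℝ}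

noncomputable def snocMeasurableEquiv (N : ℕ) :
    ℝ × (Fin N → ℝ) ≃ᵐ (Fin (N + 1) → ℝ) :=
  (MeasurableEquiv.piFinSuccAbove (fun _ ↦ ℝ) (Fin.last N)).symm

@[simp]
theorem snocMeasurableEquiv_apply (z : ℝ × (Fin N → ℝ)) :
    snocMeasurableEquiv N z = Fin.snoc z.2 z.1 := by
  simp [snocMeasurableEquiv, Fin.snocEquiv]

theorem measurePreserving_snocMeasurableEquiv (N : ℕ) :
    MeasurePreserving (snocMeasurableEquiv N) (volume.prod volume) volume :=
  (volume_preserving_piFinSuccAbove (fun _ ↦ ℝ) (Fin.last N)).symm _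

theorem measurableSet_snocMeasurableEquiv_preimage_ordSimplex :
    MeasurableSet (snocMeasurableEquiv N ⁻¹' ordSimplex (N + 1) T) :=
  (snocMeasurableEquiv N).measurable (measurableSet_ordSimplex _ _)

theorem setIntegral_ordSimplex_succ_eq_setIntegral_prod :
    ∫ t in ordSimplex (N + 1) T, F t =
      ∫ z in snocMeasurableEquiv N ⁻¹' ordSimplex (N + 1) T, F (Fin.snoc z.2 z.1)
        ∂(volume.prod volume) := by
  rw [← (measurePreserving_snocMeasurableEquiv N).setIntegral_preimage_emb
    (snocMeasurableEquiv N).measurableEmbedding]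
  simp

theorem MeasureTheory.IntegrableOn.comp_snocMeasurableEquiv
    (hF : IntegrableOn F (ordSimplex (N + 1) T)) :
    IntegrableOn (fun z ↦ F (Fin.snoc z.2 z.1))
      (snocMeasurableEquiv N ⁻¹' ordSimplex (N + 1) T) (volume.prod volume) := by
  simpa [Function.comp_def] using
    ((measurePreserving_snocMeasurableEquiv N).integrableOn_comp_preimage
      (snocMeasurableEquiv N).measurableEmbedding).2 hF

theorem setIntegral_slice_snocMeasurableEquiv_preimage_ordSimplex
    (F : (Fin (N + 1) → ℝ) → ℝ) :
    (fun τ ↦ ∫ s in Prod.mk τ ⁻¹' (snocMeasurableEquiv N ⁻¹' ordSimplex (N + 1) T),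
        F (Fin.snoc s τ)) =
      (Icc 0 T).indicator fun τ ↦ ∫ s in ordSimplex N τ, F (Fin.snoc s τ) := by
  funext τ
  by_cases hτ : τ ∈ Icc 0 T
  · rw [indicator_of_mem hτ]
    congr 2
    ext s
    simp [snoc_mem_ordSimplex_iff, hτ]
  · rw [indicator_of_notMem hτ]
    convert setIntegral_empty
    ext s
    simp [snoc_mem_ordSimplex_iff, hτ]

theorem setIntegral_slice_snocMeasurableEquiv_preimage_ordSimplex_symm
    (F : (Fin (N + 1) → ℝ) → ℝ) :
    (fun s ↦ ∫ τ in (·, s) ⁻¹' (snocMeasurableEquiv N ⁻¹' ordSimplex (N + 1) T),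
        F (Fin.snoc s τ)) =
      (ordSimplex N T).indicator fun s ↦ ∫ τ in Icc (lastOrZero s) T, F (Fin.snoc s τ) := by
  funext s
  by_cases hs : s ∈ ordSimplex N T
  · rw [indicator_of_mem hs]
    congr 2
    ext τ
    simp [snoc_mem_ordSimplex_iff_lastOrZero, hs]
  · rw [indicator_of_notMem hs]
    convert setIntegral_empty
    ext τ
    simp [snoc_mem_ordSimplex_iff_lastOrZero, hs]

theorem setIntegral_ordSimplex_succ_eq_setIntegral_Icc
    (hF : IntegrableOn F (ordSimplex (N + 1) T)) :
    ∫ t in ordSimplex (N + 1) T, F t =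
      ∫ τ in Icc 0 T, ∫ s in ordSimplex N τ, F (Fin.snoc s τ) := by
  rw [setIntegral_ordSimplex_succ_eq_setIntegral_prod,
    setIntegral_prod_eq_integral_setIntegral measurableSet_snocMeasurableEquiv_preimage_ordSimplex
      hF.comp_snocMeasurableEquiv,
    setIntegral_slice_snocMeasurableEquiv_preimage_ordSimplex, integral_indicator measurableSet_Icc]

theorem setIntegral_ordSimplex_succ_eq_setIntegral_ordSimplex
    (hF : IntegrableOn F (ordSimplex (N + 1) T)) :
    ∫ t in ordSimplex (N + 1) T, F t =
      ∫ s in ordSimplex N T, ∫ τ in Icc (lastOrZero s) T, F (Fin.snoc s τ) := by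
  rw [setIntegral_ordSimplex_succ_eq_setIntegral_prod,
    setIntegral_prod_eq_integral_setIntegral_symm
      measurableSet_snocMeasurableEquiv_preimage_ordSimplex hF.comp_snocMeasurableEquiv,
    setIntegral_slice_snocMeasurableEquiv_preimage_ordSimplex_symm,
    integral_indicator (measurableSet_ordSimplex N T)]

theorem MeasureTheory.IntegrableOn.integrableOn_Icc_setIntegral_ordSimplex
    (hF : IntegrableOn F (ordSimplex (N + 1) T)) :
    IntegrableOn (fun τ ↦ ∫ s in ordSimplex N τ, F (Fin.snoc s τ)) (Icc 0 T) := by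
  rw [← integrable_indicator_iff measurableSet_Icc,
    ← setIntegral_slice_snocMeasurableEquiv_preimage_ordSimplex]
  exact hF.comp_snocMeasurableEquiv.integrable_setIntegral_prod_left
    measurableSet_snocMeasurableEquiv_preimage_ordSimplex

theorem MeasureTheory.IntegrableOn.integrableOn_ordSimplex_setIntegral_Icc
    (hF : IntegrableOn F (ordSimplex (N + 1) T)) :
    IntegrableOn (fun s ↦ ∫ τ in Icc (lastOrZero s) T, F (Fin.snoc s τ))
      (ordSimplex N T) := by
  rw [← integrable_indicator_iff (measurableSet_ordSimplex N T),
    ← setIntegral_slice_snocMeasurableEquiv_preimage_ordSimplex_symm]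
  exact hF.comp_snocMeasurableEquiv.integrable_setIntegral_prod_right
    measurableSet_snocMeasurableEquiv_preimage_ordSimplex

end Slicing

theorem setIntegral_Icc_deriv_mul_eq_sub {a b : ℝ} (hab : a ≤ b) {u u' v v' : ℝ → ℝ}
    (hu : ∀ x, HasDerivAt u (u' x) x) (hv : ∀ x, HasDerivAt v (v' x) x)
    (hu' : Continuous u') (hv' : Continuous v') :
    ∫ x in Icc a b, v' x * u x = v b * u b - v a * u a - ∫ x in Icc a b, v x * u' x := by
  simp only [integral_Icc_eq_integral_Ioc, ← intervalIntegral.integral_of_le hab]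
  have := intervalIntegral.integral_mul_deriv_eq_deriv_mul (fun x _ ↦ hu x) (fun x _ ↦ hv x)
    (hu'.intervalIntegrable a b) (hv'.intervalIntegrable a b)
  simp only [mul_comm (v' _), mul_comm (v _)] at this ⊢
  rw [this]

theorem DifferentiableAt.hasDerivAt_comp_update {𝕜 ι F : Type*} [NontriviallyNormedField 𝕜]
    [Fintype ι] [DecidableEq ι] [NormedAddCommGroup F] [NormedSpace 𝕜 F]
    {f : (ι → 𝕜) → F} {x : ι → 𝕜} (hf : DifferentiableAt 𝕜 f x) (i : ι) :
    HasDerivAt (fun y ↦ f (Function.update x i y)) (fderiv 𝕜 f x (Pi.single i 1)) (x i) := by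
  rw [← Function.update_eq_self i x] at hf
  simpa [Function.comp_def] using
    hf.hasFDerivAt.comp_hasDerivAt (x i) (hasDerivAt_update x i (x i))

section PartialDerivatives

variable {g g' : ℝ → ℝ}

theorem setIntegral_ordSimplex_partialDeriv_last_mul {N : ℕ} {T : ℝ} (hT : 0 ≤ T)
    {p q : (Fin (N + 1) → ℝ) → ℝ} (hp : Continuous p) (hq : Continuous q)
    (hpq : ∀ s τ, HasDerivAt (fun x ↦ p (Fin.snoc s x)) (q (Fin.snoc s τ)) τ)
    (hg : ∀ x, HasDerivAt g (g' x) x) (hg' : Continuous g') :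
    ∫ t in ordSimplex (N + 1) T, q t * g (t (Fin.last N)) =
      g T * (∫ s in ordSimplex N T, p (Fin.snoc s T))
        - (∫ s in ordSimplex N T, p (Fin.snoc s (lastOrZero s)) * g (lastOrZero s))
        - ∫ t in ordSimplex (N + 1) T, p t * g' (t (Fin.last N)) := by
  have hg_cont : Continuous g := continuous_iff_continuousAt.2 fun x ↦ (hg x).continuousAt
  have hslice : ∀ s ∈ ordSimplex N T,
      ∫ τ in Icc (lastOrZero s) T, q (Fin.snoc s τ) * g τ =
        g T * p (Fin.snoc s T) - p (Fin.snoc s (lastOrZero s)) * g (lastOrZero s)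
          - ∫ τ in Icc (lastOrZero s) T, p (Fin.snoc s τ) * g' τ := fun s hs ↦ by
    rw [setIntegral_Icc_deriv_mul_eq_sub (lastOrZero_le_of_mem_ordSimplex hT hs) hg (hpq s) hg'
      (hq.comp (continuous_const.finSnoc continuous_id)), mul_comm (g T)]
  have hupper : IntegrableOn (fun s ↦ g T * p (Fin.snoc s T)) (ordSimplex N T) :=
    ContinuousOn.integrableOn_ordSimplex <|
      (continuous_const.mul (hp.comp (continuous_snoc_const T))).continuousOn
  have hlower : IntegrableOn (fun s ↦ p (Fin.snoc s (lastOrZero s)) * g (lastOrZero s))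
      (ordSimplex N T) :=
    ContinuousOn.integrableOn_ordSimplex <|
      ((hp.comp (continuous_id.finSnoc continuous_lastOrZero)).mul
        (hg_cont.comp continuous_lastOrZero)).continuousOn
  have hqg : IntegrableOn (fun t ↦ q t * g (t (Fin.last N))) (ordSimplex (N + 1) T) :=
    ContinuousOn.integrableOn_ordSimplex <|
      (hq.mul (hg_cont.comp (continuous_apply _))).continuousOn
  have hpg' : IntegrableOn (fun t ↦ p t * g' (t (Fin.last N))) (ordSimplex (N + 1) T) :=
    ContinuousOn.integrableOn_ordSimplex <|
      (hp.mul (hg'.comp (continuous_apply _))).continuousOn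
  have hbulk := hpg'.integrableOn_ordSimplex_setIntegral_Icc
  rw [setIntegral_ordSimplex_succ_eq_setIntegral_ordSimplex hqg,
    setIntegral_ordSimplex_succ_eq_setIntegral_ordSimplex hpg']
  simp only [Fin.snoc_last] at hbulk ⊢
  rw [setIntegral_congr_fun (measurableSet_ordSimplex N T) hslice, integral_sub, integral_sub,
    integral_const_mul]
  exacts [hupper, hlower, hupper.sub hlower, hbulk]

theorem sum_setIntegral_partialDeriv_castSucc_mul_of_slices {N : ℕ} {T : ℝ}
    {p : (Fin (N + 2) → ℝ) → ℝ} {dp : Fin (N + 2) → (Fin (N + 2) → ℝ) → ℝ}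
    (hp : Continuous p) (hdp : ∀ n, Continuous (dp n)) (hg : Continuous g) (hg' : Continuous g')
    (hslice : ∀ τ ∈ Icc 0 T,
      ∑ n : Fin (N + 1), ∫ s in ordSimplex (N + 1) τ, dp n.castSucc (Fin.snoc s τ) * g (s n) =
        g τ * (∫ r in ordSimplex N τ, p (Fin.snoc (Fin.snoc r τ) τ))
          - g 0 * (∫ r in ordSimplex N τ, p (Fin.snoc (Fin.cons 0 r) τ))
          - ∫ s in ordSimplex (N + 1) τ, p (Fin.snoc s τ) * ∑ n : Fin (N + 1), g' (s n)) :
    ∑ n : Fin (N + 1), ∫ t in ordSimplex (N + 2) T, dp n.castSucc t * g (t n.castSucc) =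
      (∫ s in ordSimplex (N + 1) T, p (Fin.snoc s (lastOrZero s)) * g (lastOrZero s))
        - g 0 * (∫ s in ordSimplex (N + 1) T, p (Fin.cons 0 s))
        - ∫ t in ordSimplex (N + 2) T, p t * ∑ n : Fin (N + 1), g' (t n.castSucc) := by
  have hF : ∀ n : Fin (N + 1),
      IntegrableOn (fun t ↦ dp n.castSucc t * g (t n.castSucc)) (ordSimplex (N + 2) T) :=
    fun n ↦ ContinuousOn.integrableOn_ordSimplex <|
      ((hdp _).mul (hg.comp (continuous_apply _))).continuousOn
  have hA : IntegrableOn (fun s ↦ p (Fin.snoc s (lastOrZero s)) * g (lastOrZero s))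
      (ordSimplex (N + 1) T) :=
    ContinuousOn.integrableOn_ordSimplex <|
      ((hp.comp (continuous_id.finSnoc continuous_lastOrZero)).mul
        (hg.comp continuous_lastOrZero)).continuousOn
  have hB : IntegrableOn (fun s ↦ p (Fin.cons 0 s)) (ordSimplex (N + 1) T) :=
    ContinuousOn.integrableOn_ordSimplex <|
      (hp.comp (continuous_const.finCons continuous_id)).continuousOn
  have hC : IntegrableOn (fun t ↦ p t * ∑ n : Fin (N + 1), g' (t n.castSucc))
      (ordSimplex (N + 2) T) :=
    ContinuousOn.integrableOn_ordSimplex <|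
      (hp.mul (continuous_finsetSum _ fun n _ ↦ hg'.comp (continuous_apply _))).continuousOn
  have hA' := hA.integrableOn_Icc_setIntegral_ordSimplex
  have hB' := hB.integrableOn_Icc_setIntegral_ordSimplex.const_mul (g 0)
  rw [← integral_finsetSum _ fun n _ ↦ hF n,
    setIntegral_ordSimplex_succ_eq_setIntegral_Icc (integrable_finsetSum _ fun n _ ↦ hF n),
    setIntegral_ordSimplex_succ_eq_setIntegral_Icc hA,
    setIntegral_ordSimplex_succ_eq_setIntegral_Icc hB,
    setIntegral_ordSimplex_succ_eq_setIntegral_Icc hC, ← integral_const_mul,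
    ← integral_sub, ← integral_sub]
  · refine setIntegral_congr_fun measurableSet_Icc fun τ hτ ↦ ?_
    simp only [Fin.snoc_castSucc, lastOrZero_snoc, Fin.cons_snoc_eq_snoc_cons]
    rw [integral_finsetSum _ fun n _ ↦ ?_, hslice τ hτ, integral_mul_const]
    · ring
    · exact ContinuousOn.integrableOn_ordSimplex <|
        (((hdp _).comp (continuous_snoc_const τ)).mul (hg.comp (continuous_apply n))).continuousOn
  exacts [hA'.sub hB', hC.integrableOn_Icc_setIntegral_ordSimplex, hA', hB']

theorem sum_setIntegral_partialDeriv_mul_of_castSucc {N : ℕ} {T : ℝ} (hT : 0 ≤ T)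
    {p : (Fin (N + 1) → ℝ) → ℝ} {dp : Fin (N + 1) → (Fin (N + 1) → ℝ) → ℝ}
    (hp : Continuous p) (hdp : ∀ n, Continuous (dp n))
    (hpdp : ∀ n t, HasDerivAt (fun x ↦ p (Function.update t n x)) (dp n t) (t n))
    (hg : ∀ x, HasDerivAt g (g' x) x) (hg' : Continuous g')
    (hcastSucc : ∑ n : Fin N, ∫ t in ordSimplex (N + 1) T, dp n.castSucc t * g (t n.castSucc) =
      (∫ s in ordSimplex N T, p (Fin.snoc s (lastOrZero s)) * g (lastOrZero s))
        - g 0 * (∫ s in ordSimplex N T, p (Fin.cons 0 s))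
        - ∫ t in ordSimplex (N + 1) T, p t * ∑ n : Fin N, g' (t n.castSucc)) :
    ∑ n : Fin (N + 1), ∫ t in ordSimplex (N + 1) T, dp n t * g (t n) =
      g T * (∫ s in ordSimplex N T, p (Fin.snoc s T))
        - g 0 * (∫ s in ordSimplex N T, p (Fin.cons 0 s))
        - ∫ t in ordSimplex (N + 1) T, p t * ∑ n : Fin (N + 1), g' (t n) := by
  have hlast := setIntegral_ordSimplex_partialDeriv_last_mul hT hp (hdp (Fin.last N))
    (fun s τ ↦ by simpa [Fin.update_snoc_last] using hpdp (Fin.last N) (Fin.snoc s τ)) hg hg'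
  have hsplit : ∫ t in ordSimplex (N + 1) T, p t * ∑ n : Fin (N + 1), g' (t n) =
      (∫ t in ordSimplex (N + 1) T, p t * ∑ n : Fin N, g' (t n.castSucc))
        + ∫ t in ordSimplex (N + 1) T, p t * g' (t (Fin.last N)) := by
    simp only [Fin.sum_univ_castSucc, mul_add]
    exact integral_add
      (ContinuousOn.integrableOn_ordSimplex <| (hp.mul <| continuous_finsetSum _ fun n _ ↦
        hg'.comp (continuous_apply _)).continuousOn)
      (ContinuousOn.integrableOn_ordSimplex <|
        (hp.mul (hg'.comp (continuous_apply _))).continuousOn)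
  rw [Fin.sum_univ_castSucc, hcastSucc, hlast, hsplit]
  ring

-- The partial derivatives `dp` are hypotheses rather than `fderiv`s so that the induction
-- hypothesis applies verbatim to the slices `p (·, τ)`.
theorem sum_setIntegral_partialDeriv_mul_eq {M : ℕ} {T : ℝ} (hT : 0 ≤ T)
    {p : (Fin (M + 1) → ℝ) → ℝ} {dp : Fin (M + 1) → (Fin (M + 1) → ℝ) → ℝ}
    (hp : Continuous p) (hdp : ∀ n, Continuous (dp n))
    (hpdp : ∀ n t, HasDerivAt (fun x ↦ p (Function.update t n x)) (dp n t) (t n))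
    (hg : ∀ x, HasDerivAt g (g' x) x) (hg' : Continuous g') :
    ∑ n : Fin (M + 1), ∫ t in ordSimplex (M + 1) T, dp n t * g (t n) =
      g T * (∫ s in ordSimplex M T, p (Fin.snoc s T))
        - g 0 * (∫ s in ordSimplex M T, p (Fin.cons 0 s))
        - ∫ t in ordSimplex (M + 1) T, p t * ∑ n : Fin (M + 1), g' (t n) := by
  induction M generalizing T with
  | zero =>
    refine sum_setIntegral_partialDeriv_mul_of_castSucc hT hp hdp hpdp hg hg' ?_
    have hsnoc_zero (s : Fin 0 → ℝ) : (Fin.snoc s 0 : Fin 1 → ℝ) = Fin.cons 0 s := by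
      ext i
      fin_cases i
      rfl
    simp [hsnoc_zero, lastOrZero, mul_comm, integral_const_mul]
  | succ N ih =>
    have hg_cont : Continuous g := continuous_iff_continuousAt.2 fun x ↦ (hg x).continuousAt
    refine sum_setIntegral_partialDeriv_mul_of_castSucc hT hp hdp hpdp hg hg' <|
      sum_setIntegral_partialDeriv_castSucc_mul_of_slices hp hdp hg_cont hg' fun τ hτ ↦
        ih hτ.1 (hp.comp (continuous_snoc_const τ))
          (fun n ↦ (hdp n.castSucc).comp (continuous_snoc_const τ)) fun n s ↦ ?_
    simpa [Fin.snoc_update] using hpdp n.castSucc (Fin.snoc s τ)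

end PartialDerivatives

/-- coordinatewise integration by parts over the ordered simplex for an
integrand whose `n`-th score factor `g (t n)` depends only on the `n`-th coordinate:
all interior facet boundary terms cancel telescopically, leaving only the facets
`{t 1 = 0}` and `{t N = T}`.  Here `N = M + 1 ≥ 1`; for `N = 1` the integrals over
`ordSimplex 0 T` (the one-point space `ℝ^0` with unit measure) are `p T` and `p 0`. -/
theorem stmt_6 (M : ℕ) (T : ℝ) (hT : 0 < T)
    (p : (Fin (M + 1) → ℝ) → ℝ) (hp : ContDiff ℝ 1 p)
    (g : ℝ → ℝ) (hg : ContDiff ℝ 1 g) :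
    ∑ n : Fin (M + 1), ∫ t in ordSimplex (M + 1) T,
        fderiv ℝ p t (Pi.single n 1) * g (t n)
    = g T * (∫ s in ordSimplex M T, p (Fin.snoc s T))
      - g 0 * (∫ s in ordSimplex M T, p (Fin.cons 0 s))
      - ∫ t in ordSimplex (M + 1) T, p t * ∑ n : Fin (M + 1), deriv g (t n) :=
  sum_setIntegral_partialDeriv_mul_eq hT.le hp.continuous
    (fun _ ↦ (hp.continuous_fderiv one_ne_zero).clm_apply continuous_const)
    (fun n t ↦ (hp.differentiable one_ne_zero t).hasDerivAt_comp_update n)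
    (fun x ↦ (hg.differentiable one_ne_zero x).hasDerivAt) (hg.continuous_deriv le_rfl)
end

section
/- Let N ≥ 1, T > 0, and let S_N = {t ∈ ℝ^N : 0 ≤ t_1 ≤ t_2 ≤ ⋯ ≤ t_N ≤ T} be the ordered simplex. Let p : ℝ^N → ℝ be continuously differentiable, let g : ℝ → ℝ be continuously differentiable, and for each n ∈ {1,…,N} let h_n : ℝ^N → ℝ be continuously differentiable and satisfy, for every t ∈ S_N: h_n(t) = 0 whenever t_n = t_{n−1} and h_n(t) = 0 whenever t_n = t_{n+1}, with the conventions t_0 = 0 and t_{N+1} = T. Then ∑_{n=1}^N ∫_{S_N} (∂p/∂t_n)(t)·g(t_n)·h_n(t) dt = −∫_{S_N} p(t)·∑_{n=1}^N (g'(t_n)·h_n(t) + g(t_n)·(∂h_n/∂t_n)(t)) dt. -/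
/-!
For each `n`, the integrand `∂ₙp · g(tₙ) hₙ + p · (g'(tₙ) hₙ + g(tₙ) ∂ₙhₙ)` is `∂ₙ` of
`Fₙ = p · g(tₙ) · hₙ`. By Fubini, integrate `∂ₙFₙ` over the simplex first along the `n`-th
coordinate: the line through a point of the simplex in direction `eₙ` meets it in the segment
`t_{n-1} ≤ tₙ ≤ t_{n+1}` (with `t₀ = 0`, `t_{N+1} = T`), so by the fundamental theorem of
calculus this inner integral is the difference of the values of `Fₙ` at the two ends of the
segment. Those ends lie on the facets where `hₙ` vanishes, so every inner integral is zero.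
-/

open MeasureTheory Real Set

theorem integral_eq_integral_integral_insertNth {E : Type*} [NormedAddCommGroup E]
    [NormedSpace ℝ E] {M : ℕ} {f : (Fin (M + 1) → ℝ) → E} (hf : Integrable f) (n : Fin (M + 1)) :
    ∫ t, f t = ∫ y : Fin M → ℝ, ∫ x : ℝ, f (n.insertNth x y) := by
  have hmp := (volume_preserving_piFinSuccAbove (fun _ : Fin (M + 1) => ℝ) n).symm
  rw [← hmp.integral_comp (MeasurableEquiv.measurableEmbedding _), Measure.volume_eq_prod,
    integral_prod_symm]
  · rfl
  · rw [← Measure.volume_eq_prod]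
    exact (hmp.integrable_comp_emb (MeasurableEquiv.measurableEmbedding _)).2 hf

theorem integral_Icc_fderiv_update_single {E : Type*} [NormedAddCommGroup E] [NormedSpace ℝ E]
    [CompleteSpace E] {ι : Type*} [Fintype ι] [DecidableEq ι] {F : (ι → ℝ) → E}
    (hF : ContDiff ℝ 1 F) (t : ι → ℝ) (i : ι) {a b : ℝ} (hab : a ≤ b) :
    ∫ x in Icc a b, fderiv ℝ F (Function.update t i x) (Pi.single i 1) =
      F (Function.update t i b) - F (Function.update t i a) := by
  rw [integral_Icc_eq_integral_Ioc, ← intervalIntegral.integral_of_le hab]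
  refine intervalIntegral.integral_eq_sub_of_hasDerivAt (f := fun x => F (Function.update t i x))
    (fun x _ => ?_) ?_
  · exact (hF.differentiable one_ne_zero _).hasFDerivAt.comp_hasDerivAt x
      (hasDerivAt_update t i x)
  · exact (((hF.continuous_fderiv one_ne_zero).comp
      (continuous_const.update i continuous_id)).clm_apply continuous_const).intervalIntegrable a b

theorem fderiv_mul_comp_apply_mul_apply_single {ι : Type*} [Fintype ι] [DecidableEq ι]
    {p h : (ι → ℝ) → ℝ} {g : ℝ → ℝ} {t : ι → ℝ} {n : ι} (hp : DifferentiableAt ℝ p t)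
    (hg : DifferentiableAt ℝ g (t n)) (hh : DifferentiableAt ℝ h t) :
    fderiv ℝ (fun t => p t * (g (t n) * h t)) t (Pi.single n 1) =
      fderiv ℝ p t (Pi.single n 1) * (g (t n) * h t) +
        p t * (deriv g (t n) * h t + g (t n) * fderiv ℝ h t (Pi.single n 1)) := by
  have hgn : HasFDerivAt (fun t : ι → ℝ => g (t n))
      (deriv g (t n) • ContinuousLinearMap.proj n) t :=
    hg.hasDerivAt.comp_hasFDerivAt t (hasFDerivAt_apply (𝕜 := ℝ) n t)
  have hprod : HasFDerivAt (fun t => p t * (g (t n) * h t)) _ t :=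
    hp.hasFDerivAt.mul (hgn.mul hh.hasFDerivAt)
  rw [hprod.fderiv]
  simp only [add_apply, smul_apply, ContinuousLinearMap.proj_apply, Pi.single_eq_same,
    smul_eq_mul]
  ring

namespace ordSimplex

theorem isClosed (N : ℕ) (T : ℝ) : IsClosed (ordSimplex N T) := by
  simp only [ordSimplex, ofPred_and, ofPred_forall]
  exact isClosed_monotone.inter
    (isClosed_iInter fun i => isClosed_Icc.preimage (continuous_apply i))

theorem isCompact (N : ℕ) (T : ℝ) : IsCompact (ordSimplex N T) :=
  (isCompact_univ_pi fun _ => isCompact_Icc).of_isClosed_subset (isClosed N T)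
    fun _ ht i _ => ht.2 i

variable {M : ℕ} {T : ℝ} {t : Fin (M + 1) → ℝ}

/-- The range of the `n`-th coordinate of a point of the simplex when the others are fixed is
`[t (n-1), t (n+1)]`, with the paper's conventions `t (-1) = 0` and `t (M+1) = T` (0-indexed). -/
def lowerBound (t : Fin (M + 1) → ℝ) (n : Fin (M + 1)) : ℝ :=
  if h : (n : ℕ) = 0 then 0 else t ⟨(n : ℕ) - 1, by omega⟩

def upperBound (T : ℝ) (t : Fin (M + 1) → ℝ) (n : Fin (M + 1)) : ℝ :=
  if h : (n : ℕ) = M then T else t ⟨(n : ℕ) + 1, by omega⟩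

theorem le_lowerBound_of_lt (ht : t ∈ ordSimplex (M + 1) T) {i n : Fin (M + 1)} (hin : i < n) :
    t i ≤ lowerBound t n := by
  rw [lowerBound, dif_neg (by omega)]
  exact ht.1 (Fin.le_def.2 (by simp; omega))

theorem upperBound_le_of_lt (ht : t ∈ ordSimplex (M + 1) T) {i n : Fin (M + 1)} (hni : n < i) :
    upperBound T t n ≤ t i := by
  rw [upperBound, dif_neg (by omega)]
  exact ht.1 (Fin.le_def.2 (by simp; omega))

theorem lowerBound_nonneg (ht : t ∈ ordSimplex (M + 1) T) (n : Fin (M + 1)) :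
    0 ≤ lowerBound t n := by
  unfold lowerBound; split_ifs
  exacts [le_rfl, (ht.2 _).1]

theorem upperBound_le (ht : t ∈ ordSimplex (M + 1) T) (n : Fin (M + 1)) :
    upperBound T t n ≤ T := by
  unfold upperBound; split_ifs
  exacts [le_rfl, (ht.2 _).2]

theorem update_mem_iff (ht : t ∈ ordSimplex (M + 1) T) (n : Fin (M + 1)) (x : ℝ) :
    Function.update t n x ∈ ordSimplex (M + 1) T ↔ x ∈ Icc (lowerBound t n) (upperBound T t n) := by
  constructor
  · rintro ⟨hmono, hbound⟩
    constructor
    · by_cases h : (n : ℕ) = 0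
      · simpa [lowerBound, h] using (hbound n).1
      · have hm : (⟨(n : ℕ) - 1, by omega⟩ : Fin (M + 1)) < n :=
          Fin.lt_def.2 (show (n : ℕ) - 1 < n by omega)
        simpa [lowerBound, h, Function.update_of_ne hm.ne] using hmono hm.le
    · by_cases h : (n : ℕ) = M
      · simpa [upperBound, h] using (hbound n).2
      · have hm : n < (⟨(n : ℕ) + 1, by omega⟩ : Fin (M + 1)) := Fin.lt_def.2 (by simp)
        simpa [upperBound, h, Function.update_of_ne hm.ne'] using hmono hm.le
  · rintro ⟨hlo, hhi⟩
    refine ⟨fun i j hij => ?_, fun i => ?_⟩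
    · rcases eq_or_ne i n with rfl | hi <;> rcases eq_or_ne j i with rfl | hj
      · exact le_rfl
      · simpa [Function.update_of_ne hj] using
          hhi.trans (upperBound_le_of_lt ht (lt_of_le_of_ne hij hj.symm))
      · simp
      · rcases eq_or_ne j n with rfl | hjn
        · simpa [Function.update_of_ne hi] using
            (le_lowerBound_of_lt ht (lt_of_le_of_ne hij hi)).trans hlo
        · simpa [Function.update_of_ne hi, Function.update_of_ne hjn] using ht.1 hij
    · rcases eq_or_ne i n with rfl | hi
      · simpa using ⟨(lowerBound_nonneg ht i).trans hlo, hhi.trans (upperBound_le ht i)⟩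
      · simpa [Function.update_of_ne hi] using ht.2 i

theorem lowerBound_le_upperBound (ht : t ∈ ordSimplex (M + 1) T) (n : Fin (M + 1)) :
    lowerBound t n ≤ upperBound T t n := by
  have := (update_mem_iff ht n (t n)).1 (by simpa using ht)
  exact this.1.trans this.2

theorem apply_update_lowerBound_eq_zero (ht : t ∈ ordSimplex (M + 1) T) {n : Fin (M + 1)}
    {F : (Fin (M + 1) → ℝ) → ℝ}
    (hzero : ∀ t ∈ ordSimplex (M + 1) T, (n : ℕ) = 0 → t n = 0 → F t = 0)
    (hprev : ∀ t ∈ ordSimplex (M + 1) T, ∀ m : Fin (M + 1),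
      (m : ℕ) + 1 = (n : ℕ) → t n = t m → F t = 0) :
    F (Function.update t n (lowerBound t n)) = 0 := by
  have hmem := (update_mem_iff ht n _).2 ⟨le_rfl, lowerBound_le_upperBound ht n⟩
  by_cases hn : (n : ℕ) = 0
  · exact hzero _ hmem hn (by simp [lowerBound, hn])
  · set m : Fin (M + 1) := ⟨(n : ℕ) - 1, by omega⟩
    have hmn : m ≠ n := Fin.ne_of_val_ne (by simp [m]; omega)
    exact hprev _ hmem m (by simp [m]; omega)
      (by simp [lowerBound, hn, Function.update_of_ne hmn, m])

theorem apply_update_upperBound_eq_zero (ht : t ∈ ordSimplex (M + 1) T) {n : Fin (M + 1)}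
    {F : (Fin (M + 1) → ℝ) → ℝ}
    (hnext : ∀ t ∈ ordSimplex (M + 1) T, ∀ m : Fin (M + 1),
      (n : ℕ) + 1 = (m : ℕ) → t n = t m → F t = 0)
    (hT : ∀ t ∈ ordSimplex (M + 1) T, (n : ℕ) = M → t n = T → F t = 0) :
    F (Function.update t n (upperBound T t n)) = 0 := by
  have hmem := (update_mem_iff ht n _).2 ⟨lowerBound_le_upperBound ht n, le_rfl⟩
  by_cases hn : (n : ℕ) = M
  · exact hT _ hmem hn (by simp [upperBound, hn])
  · set m : Fin (M + 1) := ⟨(n : ℕ) + 1, by omega⟩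
    have hmn : m ≠ n := Fin.ne_of_val_ne (by simp [m])
    exact hnext _ hmem m (by simp [m])
      (by simp [upperBound, hn, Function.update_of_ne hmn, m])

theorem integral_fderiv_single_eq_zero (n : Fin (M + 1))
    {F : (Fin (M + 1) → ℝ) → ℝ} (hF : ContDiff ℝ 1 F)
    (hzero : ∀ t ∈ ordSimplex (M + 1) T, (n : ℕ) = 0 → t n = 0 → F t = 0)
    (hprev : ∀ t ∈ ordSimplex (M + 1) T, ∀ m : Fin (M + 1),
      (m : ℕ) + 1 = (n : ℕ) → t n = t m → F t = 0)
    (hnext : ∀ t ∈ ordSimplex (M + 1) T, ∀ m : Fin (M + 1),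
      (n : ℕ) + 1 = (m : ℕ) → t n = t m → F t = 0)
    (hT : ∀ t ∈ ordSimplex (M + 1) T, (n : ℕ) = M → t n = T → F t = 0) :
    ∫ t in ordSimplex (M + 1) T, fderiv ℝ F t (Pi.single n 1) = 0 := by
  have hS : MeasurableSet (ordSimplex (M + 1) T) := (isClosed _ _).measurableSet
  have hD : Continuous fun t => fderiv ℝ F t (Pi.single n 1) :=
    (hF.continuous_fderiv one_ne_zero).clm_apply continuous_const
  have hline : ∀ t ∈ ordSimplex (M + 1) T, ∫ x, (ordSimplex (M + 1) T).indicator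
      (fun t => fderiv ℝ F t (Pi.single n 1)) (Function.update t n x) = 0 := by
    intro t ht
    have hpre : Function.update t n ⁻¹' ordSimplex (M + 1) T = Icc _ _ :=
      Set.ext (update_mem_iff ht n)
    simp_rw [← Set.indicator_comp_right]
    rw [integral_indicator (hpre ▸ measurableSet_Icc), hpre, Function.comp_def,
      integral_Icc_fderiv_update_single hF t n (lowerBound_le_upperBound ht n),
      apply_update_lowerBound_eq_zero ht hzero hprev,
      apply_update_upperBound_eq_zero ht hnext hT, sub_zero]
  rw [← integral_indicator hS, integral_eq_integral_integral_insertNth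
    ((hD.continuousOn.integrableOn_compact (isCompact _ _)).integrable_indicator hS) n]
  refine integral_eq_zero_of_ae (ae_of_all _ fun y => ?_)
  rw [Pi.zero_apply]
  by_cases hy : ∃ x, Fin.insertNth (α := fun _ => ℝ) n x y ∈ ordSimplex (M + 1) T
  · obtain ⟨x₀, ht⟩ := hy
    simpa only [Fin.update_insertNth] using hline _ ht
  · push Not at hy
    simp only [Set.indicator_of_notMem (hy _), integral_zero]

end ordSimplex

theorem stmt_7_general (M : ℕ) (T : ℝ)
    (p : (Fin (M + 1) → ℝ) → ℝ) (hp : ContDiff ℝ 1 p)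
    (g : ℝ → ℝ) (hg : ContDiff ℝ 1 g)
    (h : Fin (M + 1) → (Fin (M + 1) → ℝ) → ℝ)
    (hhsmooth : ∀ n, ContDiff ℝ 1 (h n))
    (hvanish_zero : ∀ t ∈ ordSimplex (M + 1) T, ∀ n : Fin (M + 1),
      (n : ℕ) = 0 → t n = 0 → h n t = 0)
    (hvanish_prev : ∀ t ∈ ordSimplex (M + 1) T, ∀ n m : Fin (M + 1),
      (m : ℕ) + 1 = (n : ℕ) → t n = t m → h n t = 0)
    (hvanish_next : ∀ t ∈ ordSimplex (M + 1) T, ∀ n m : Fin (M + 1),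
      (n : ℕ) + 1 = (m : ℕ) → t n = t m → h n t = 0)
    (hvanish_T : ∀ t ∈ ordSimplex (M + 1) T, ∀ n : Fin (M + 1),
      (n : ℕ) = M → t n = T → h n t = 0) :
    ∑ n : Fin (M + 1), ∫ t in ordSimplex (M + 1) T,
        fderiv ℝ p t (Pi.single n 1) * (g (t n) * h n t)
    = -∫ t in ordSimplex (M + 1) T,
        p t * ∑ n : Fin (M + 1),
          (deriv g (t n) * h n t + g (t n) * fderiv ℝ (h n) t (Pi.single n 1)) := by
  have hint {f : (Fin (M + 1) → ℝ) → ℝ} (hf : Continuous f) :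
      IntegrableOn f (ordSimplex (M + 1) T) :=
    hf.continuousOn.integrableOn_compact (ordSimplex.isCompact _ _)
  have hp' := hp.continuous_fderiv one_ne_zero
  have hg' := hg.continuous_deriv le_rfl
  have hh' n := (hhsmooth n).continuous_fderiv one_ne_zero
  have hpc := hp.continuous
  have hgc := hg.continuous
  have hhc n := (hhsmooth n).continuous
  have hboundary (n : Fin (M + 1)) : ∫ t in ordSimplex (M + 1) T,
      fderiv ℝ (fun t => p t * (g (t n) * h n t)) t (Pi.single n 1) = 0 :=
    ordSimplex.integral_fderiv_single_eq_zero n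
      (hp.mul ((hg.comp (contDiff_apply ℝ ℝ n)).mul (hhsmooth n)))
      (fun t ht hn htn => by simp [hvanish_zero t ht n hn htn])
      (fun t ht m hm htm => by simp [hvanish_prev t ht n m hm htm])
      (fun t ht m hm htm => by simp [hvanish_next t ht n m hm htm])
      (fun t ht hn htn => by simp [hvanish_T t ht n hn htn])
  simp_rw [fun n t => fderiv_mul_comp_apply_mul_apply_single (hp.differentiable one_ne_zero t)
    (hg.differentiable one_ne_zero (t n)) ((hhsmooth n).differentiable one_ne_zero t)] at hboundary
  simp_rw [Finset.mul_sum]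
  rw [integral_finsetSum _ fun n _ => hint (by fun_prop), ← Finset.sum_neg_distrib]
  refine Finset.sum_congr rfl fun n _ => eq_neg_of_add_eq_zero_left ?_
  rw [← integral_add (hint (by fun_prop)) (hint (by fun_prop))]
  exact hboundary n

/-- weighted coordinatewise integration by parts over the ordered simplex:
if each weight `h n` vanishes on the facets `{t n = t (n-1)}` and `{t n = t (n+1)}`
(with the conventions `t 0 = 0`, `t (N+1) = T`), then
`∑ₙ ∫_{S_N} (∂p/∂tₙ)(t) g(tₙ) hₙ(t) dt = -∫_{S_N} p(t) ∑ₙ (g'(tₙ) hₙ(t) + g(tₙ) (∂hₙ/∂tₙ)(t)) dt`,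
with no boundary terms. -/
theorem stmt_7 (M : ℕ) (T : ℝ) (hT : 0 < T)
    (p : (Fin (M + 1) → ℝ) → ℝ) (hp : ContDiff ℝ 1 p)
    (g : ℝ → ℝ) (hg : ContDiff ℝ 1 g)
    (h : Fin (M + 1) → (Fin (M + 1) → ℝ) → ℝ)
    (hhsmooth : ∀ n, ContDiff ℝ 1 (h n))
    (hvanish_zero : ∀ t ∈ ordSimplex (M + 1) T, ∀ n : Fin (M + 1),
      (n : ℕ) = 0 → t n = 0 → h n t = 0)
    (hvanish_prev : ∀ t ∈ ordSimplex (M + 1) T, ∀ n m : Fin (M + 1),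
      (m : ℕ) + 1 = (n : ℕ) → t n = t m → h n t = 0)
    (hvanish_next : ∀ t ∈ ordSimplex (M + 1) T, ∀ n m : Fin (M + 1),
      (n : ℕ) + 1 = (m : ℕ) → t n = t m → h n t = 0)
    (hvanish_T : ∀ t ∈ ordSimplex (M + 1) T, ∀ n : Fin (M + 1),
      (n : ℕ) = M → t n = T → h n t = 0) :
    ∑ n : Fin (M + 1), ∫ t in ordSimplex (M + 1) T,
        fderiv ℝ p t (Pi.single n 1) * (g (t n) * h n t)
    = -∫ t in ordSimplex (M + 1) T,
        p t * ∑ n : Fin (M + 1),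
          (deriv g (t n) * h n t + g (t n) * fderiv ℝ (h n) t (Pi.single n 1)) :=
  stmt_7_general M T p hp g hg h hhsmooth hvanish_zero hvanish_prev hvanish_next hvanish_T
end

section
/- Let N ≥ 1, T > 0, and let S_N = {t ∈ ℝ^N : 0 ≤ t_1 ≤ t_2 ≤ ⋯ ≤ t_N ≤ T} be the ordered simplex. Let w : ℝ^N → ℝ be measurable with w(t) > 0 for Lebesgue-almost every t ∈ S_N, and for each n ∈ {1,…,N} let h_n : ℝ^N → ℝ be measurable, nonnegative, and satisfy h_n(t) > 0 for Lebesgue-almost every t ∈ S_N. Let g₁, g₂ : ℝ → ℝ be continuous on [0,T]. If ∫_{S_N} w(t)·∑_{n=1}^N (g₁(t_n) − g₂(t_n))²·h_n(t) dt = 0 (as an integral of a nonnegative function, possibly infinite), then g₁(x) = g₂(x) for every x ∈ [0,T]. -/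
open MeasureTheory Real Set

/-! If the scores differed at some `x₀ ∈ [0, T]`, then by continuity `(g₁ - g₂)²` would be
bounded below by some `c > 0` on a nondegenerate interval `[a, b] ∋ x₀`. The ordered
`N`-tuples with entries in `[a, b]` form a subset of the simplex of positive volume, on which the
objective's integrand dominates the measurable function `c · w · h₀`, which is positive a.e.
there; hence the objective would be positive. -/

theorem ContinuousOn.exists_Icc_forall_lt_of_lt {F : ℝ → ℝ} {p q x c : ℝ}
    (hF : ContinuousOn F (Icc p q)) (hpq : p < q) (hx : x ∈ Icc p q) (hc : c < F x) :
    ∃ a b, p ≤ a ∧ a < b ∧ b ≤ q ∧ ∀ y ∈ Icc a b, c < F y := by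
  obtain ⟨ε, hε, hball⟩ :=
    Metric.mem_nhdsWithin_iff.mp ((hF x hx).eventually (eventually_gt_nhds hc))
  refine ⟨max p (x - ε / 2), min q (x + ε / 2), le_max_left _ _, ?_, min_le_left _ _,
    fun y hy => hball ⟨?_, (le_max_left _ _).trans hy.1, hy.2.trans (min_le_left _ _)⟩⟩
  · exact max_lt (lt_min hpq (by linarith [hx.1])) (lt_min (by linarith [hx.2]) (by linarith))
  · have := (le_max_right _ _).trans hy.1
    have := hy.2.trans (min_le_right _ _)
    rw [Metric.mem_ball, Real.dist_eq, abs_lt]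
    constructor <;> linarith

/-- The monotone tuples in `[a, b]` contain the box `∏ᵢ [a + i δ, a + (i + 1) δ]`,
`δ = (b - a) / (N + 1)`. -/
theorem volume_setOf_monotone_Icc_pos (N : ℕ) {a b : ℝ} (hab : a < b) :
    0 < volume {t : Fin N → ℝ | Monotone t ∧ ∀ i, t i ∈ Icc a b} := by
  set δ := (b - a) / (N + 1)
  have hδ : 0 < δ := div_pos (sub_pos.2 hab) (by positivity)
  have hNδ : (N : ℝ) * δ ≤ b - a := by
    rw [mul_div_assoc', div_le_iff₀ (by positivity)]
    nlinarith
  let lower : Fin N → ℝ := fun i => a + i * δ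
  let upper : Fin N → ℝ := fun i => a + (i + 1) * δ
  have hbox : Icc lower upper ⊆ {t | Monotone t ∧ ∀ i, t i ∈ Icc a b} := by
    intro t ⟨hl, hu⟩
    have hi_le : ∀ i : Fin N, ((i : ℕ) : ℝ) + 1 ≤ N := fun i => by exact_mod_cast i.isLt
    refine ⟨fun i j hij => ?_, fun i => ⟨?_, ?_⟩⟩
    · rcases hij.eq_or_lt with rfl | hlt
      · exact le_rfl
      · have hij' : ((i : ℕ) : ℝ) + 1 ≤ (j : ℕ) := by exact_mod_cast hlt
        nlinarith [hl j, hu i]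
    · nlinarith [hl i, (i : ℕ).cast_nonneg (α := ℝ)]
    · nlinarith [hu i, hi_le i]
  refine lt_of_lt_of_le ?_ (measure_mono hbox)
  rw [Real.volume_Icc_pi]
  refine pos_iff_ne_zero.2 (Finset.prod_ne_zero_iff.2 fun i _ => (ENNReal.ofReal_pos.2 ?_).ne')
  simp only [upper, lower]
  linarith

theorem setOf_monotone_Icc_subset_ordSimplex {N : ℕ} {a b T : ℝ} (ha : 0 ≤ a) (hb : b ≤ T) :
    {t : Fin N → ℝ | Monotone t ∧ ∀ i, t i ∈ Icc a b} ⊆ ordSimplex N T :=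
  fun _ ⟨hmono, hmem⟩ => ⟨hmono, fun i => Icc_subset_Icc ha hb (hmem i)⟩

theorem measurableSet_setOf_monotone_Icc (N : ℕ) (a b : ℝ) :
    MeasurableSet {t : Fin N → ℝ | Monotone t ∧ ∀ i, t i ∈ Icc a b} := by
  rw [ofPred_and, ofPred_forall]
  exact isClosed_monotone.measurableSet.inter <|
    .iInter fun i => measurableSet_Icc.preimage (measurable_pi_apply i)

theorem MeasureTheory.measure_eq_zero_of_setLIntegral_eq_zero {α : Type*} [MeasurableSpace α]
    {μ : Measure α} {s B : Set α} {F G : α → ENNReal} (hB : B ⊆ s)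
    (hF : ∫⁻ x in s, F x ∂μ = 0) (hG : Measurable G) (hGF : ∀ᵐ x ∂μ.restrict B, G x ≤ F x)
    (hGpos : ∀ᵐ x ∂μ.restrict B, 0 < G x) : μ B = 0 := by
  have hGB : ∫⁻ x in B, G x ∂μ = 0 :=
    le_antisymm ((lintegral_mono_ae hGF).trans (hF ▸ lintegral_mono_set hB)) bot_le
  have hfalse : ∀ᵐ x ∂μ.restrict B, False := by
    filter_upwards [(lintegral_eq_zero_iff hG).mp hGB, hGpos] with x hx hpos
    exact hpos.ne' hx
  exact ae_restrict_eq_bot.mp (Filter.eventually_false_iff_eq_bot.mp hfalse)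

theorem mul_mul_le_mul_sum_mul {ι : Type*} [Fintype ι] {f h : ι → ℝ} {w c : ℝ} (i : ι)
    (hw : 0 ≤ w) (hf : ∀ n, 0 ≤ f n) (hh : ∀ n, 0 ≤ h n) (hc : c ≤ f i) :
    c * (w * h i) ≤ w * ∑ n, f n * h n := by
  have hi : f i * h i ≤ ∑ n, f n * h n :=
    Finset.single_le_sum (fun n _ => mul_nonneg (hf n) (hh n)) (Finset.mem_univ i)
  calc c * (w * h i) = w * (c * h i) := by ring
    _ ≤ w * (f i * h i) := mul_le_mul_of_nonneg_left (mul_le_mul_of_nonneg_right hc (hh i)) hw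
    _ ≤ w * ∑ n, f n * h n := mul_le_mul_of_nonneg_left hi hw

/-- if the weighted quadratic score-matching objective vanishes, where the
density `w` and the weights `h n` are positive a.e. on the ordered simplex, then the two
continuous scores `g₁, g₂` coincide on all of `[0, T]`.  The objective is the (possibly
infinite) integral of a nonnegative function, formalized as a lower integral. -/
theorem stmt_8 (M : ℕ) (T : ℝ) (hT : 0 < T)
    (w : (Fin (M + 1) → ℝ) → ℝ) (hwmeas : Measurable w)
    (hwpos : ∀ᵐ t ∂(volume.restrict (ordSimplex (M + 1) T)), 0 < w t)
    (h : Fin (M + 1) → (Fin (M + 1) → ℝ) → ℝ)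
    (hhmeas : ∀ n, Measurable (h n))
    (hhnn : ∀ n t, 0 ≤ h n t)
    (hhpos : ∀ n, ∀ᵐ t ∂(volume.restrict (ordSimplex (M + 1) T)), 0 < h n t)
    (g₁ g₂ : ℝ → ℝ)
    (hg₁ : ContinuousOn g₁ (Set.Icc 0 T)) (hg₂ : ContinuousOn g₂ (Set.Icc 0 T))
    (hzero : ∫⁻ t in ordSimplex (M + 1) T,
        ENNReal.ofReal (w t * ∑ n : Fin (M + 1), (g₁ (t n) - g₂ (t n))^2 * h n t) = 0) :
    ∀ x ∈ Set.Icc 0 T, g₁ x = g₂ x := by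
  intro x hx
  by_contra hne
  have hgap_x : 0 < (g₁ x - g₂ x) ^ 2 := sq_pos_of_ne_zero (sub_ne_zero.2 hne)
  set c := (g₁ x - g₂ x) ^ 2 / 2
  obtain ⟨a, b, ha, hab, hb, hgap⟩ :=
    ((hg₁.sub hg₂).pow 2).exists_Icc_forall_lt_of_lt hT hx (half_lt_self hgap_x)
  set A := {t : Fin (M + 1) → ℝ | Monotone t ∧ ∀ i, t i ∈ Icc a b}
  have hAS : A ⊆ ordSimplex (M + 1) T := setOf_monotone_Icc_subset_ordSimplex ha hb
  have hwA := ae_restrict_of_ae_restrict_of_subset hAS hwpos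
  have hhA := ae_restrict_of_ae_restrict_of_subset hAS (hhpos 0)
  refine (volume_setOf_monotone_Icc_pos (M + 1) hab).ne' <|
    measure_eq_zero_of_setLIntegral_eq_zero hAS hzero
      (G := fun t => ENNReal.ofReal (c * (w t * h 0 t))) (by fun_prop) ?_ ?_
  · filter_upwards [ae_restrict_mem (measurableSet_setOf_monotone_Icc _ a b), hwA] with t ht hwt
    exact ENNReal.ofReal_le_ofReal <| mul_mul_le_mul_sum_mul 0 hwt.le (fun _ => sq_nonneg _)
      (fun n => hhnn n t) (hgap _ (ht.2 0)).le
  · filter_upwards [hwA, hhA] with t hwt hht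
    exact ENNReal.ofReal_pos.2 (mul_pos (half_pos hgap_x) (mul_pos hwt hht))
end

section
/- Let a < b be real numbers, let F : ℝ → ℝ be measurable, nonnegative on [a,b], and integrable on [a,b], and define the tent function h⁰(t) = (b−a)/2 − |t − (a+b)/2|. Then for every h : ℝ → ℝ that is 1-Lipschitz on [a,b] with h(a) = 0 and h(b) = 0, one has ∫_a^b F(t)·h(t) dt ≤ ∫_a^b F(t)·h⁰(t) dt; that is, h⁰ maximizes the functional h ↦ ∫_a^b F·h over this class of weight functions. -/
open MeasureTheory Real Set

/-!
A weight `h` that is `1`-Lipschitz on `[a, b]` and vanishes at both endpoints satisfies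
`h t ≤ min (t - a) (b - t)`, which is exactly the tent `h⁰ t`. Multiplying this pointwise bound
by `F ≥ 0` and integrating gives the claim.
-/

theorem LipschitzOnWith.le_mul_dist_of_eq_zero {α : Type*} [PseudoMetricSpace α] {K : NNReal}
    {f : α → ℝ} {s : Set α} (hf : LipschitzOnWith K f s) {x y : α} (hx : x ∈ s) (hy : y ∈ s)
    (hfy : f y = 0) : f x ≤ K * dist x y := by
  have := hf.dist_le_mul x hx y hy
  rw [Real.dist_eq, hfy, sub_zero] at this
  exact (le_abs_self _).trans this

theorem half_sub_abs_sub_midpoint_eq_min (a b t : ℝ) :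
    (b - a) / 2 - |t - (a + b) / 2| = min (t - a) (b - t) := by
  rcases le_total (t - a) (b - t) with h | h
  · rw [min_eq_left h, abs_of_nonpos (by linarith)]; ring
  · rw [min_eq_right h, abs_of_nonneg (by linarith)]; ring

theorem le_tent_of_lipschitzOnWith_one {a b : ℝ} {h : ℝ → ℝ}
    (hLip : LipschitzOnWith 1 h (Icc a b)) (hha : h a = 0) (hhb : h b = 0)
    {t : ℝ} (ht : t ∈ Icc a b) : h t ≤ (b - a) / 2 - |t - (a + b) / 2| := by
  have hab : a ≤ b := ht.1.trans ht.2
  have hta := hLip.le_mul_dist_of_eq_zero ht (left_mem_Icc.2 hab) hha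
  have htb := hLip.le_mul_dist_of_eq_zero ht (right_mem_Icc.2 hab) hhb
  rw [NNReal.coe_one, one_mul, Real.dist_eq, abs_of_nonneg (sub_nonneg.2 ht.1)] at hta
  rw [NNReal.coe_one, one_mul, Real.dist_eq, abs_of_nonpos (sub_nonpos.2 ht.2)] at htb
  rw [half_sub_abs_sub_midpoint_eq_min]
  exact le_min hta (by linarith)

theorem intervalIntegral.integral_mul_le_integral_mul_of_le {a b : ℝ} (hab : a ≤ b)
    {F g k : ℝ → ℝ} (hF : IntegrableOn F (Icc a b)) (hFnn : ∀ t ∈ Icc a b, 0 ≤ F t)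
    (hg : ContinuousOn g (Icc a b)) (hk : ContinuousOn k (Icc a b))
    (hgk : ∀ t ∈ Icc a b, g t ≤ k t) :
    ∫ t in a..b, F t * g t ≤ ∫ t in a..b, F t * k t := by
  have hint : ∀ {w : ℝ → ℝ}, ContinuousOn w (Icc a b) →
      IntervalIntegrable (fun t => F t * w t) volume a b := fun hw =>
    (intervalIntegrable_iff_integrableOn_Icc_of_le hab).2 (hF.mul_continuousOn hw isCompact_Icc)
  exact intervalIntegral.integral_mono_on hab (hint hg) (hint hk)
    fun t ht => mul_le_mul_of_nonneg_left (hgk t ht) (hFnn t ht)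

theorem stmt_10_general (a b : ℝ) (hab : a < b) (F : ℝ → ℝ)
    (hFnn : ∀ t ∈ Set.Icc a b, 0 ≤ F t)
    (hFint : MeasureTheory.IntegrableOn F (Set.Icc a b))
    (h : ℝ → ℝ) (hLip : LipschitzOnWith 1 h (Set.Icc a b))
    (hha : h a = 0) (hhb : h b = 0) :
    ∫ t in a..b, F t * h t ≤ ∫ t in a..b, F t * ((b - a) / 2 - |t - (a + b) / 2|) := by
  have htent : Continuous fun t : ℝ => (b - a) / 2 - |t - (a + b) / 2| := by fun_prop
  exact intervalIntegral.integral_mul_le_integral_mul_of_le hab.le hFint hFnn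
    hLip.continuousOn htent.continuousOn fun t ht => le_tent_of_lipschitzOnWith_one hLip hha hhb ht

/-- the tent weight `h⁰ t = (b-a)/2 - |t - (a+b)/2|` maximizes
`h ↦ ∫_a^b F·h` over all 1-Lipschitz weights on `[a, b]` vanishing at both endpoints,
for any nonnegative integrable `F` on `[a, b]`. -/
theorem stmt_10 (a b : ℝ) (hab : a < b) (F : ℝ → ℝ)
    (hFmeas : Measurable F) (hFnn : ∀ t ∈ Set.Icc a b, 0 ≤ F t)
    (hFint : MeasureTheory.IntegrableOn F (Set.Icc a b))
    (h : ℝ → ℝ) (hLip : LipschitzOnWith 1 h (Set.Icc a b))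
    (hha : h a = 0) (hhb : h b = 0) :
    ∫ t in a..b, F t * h t ≤ ∫ t in a..b, F t * ((b - a) / 2 - |t - (a + b) / 2|) :=
  stmt_10_general a b hab F hFnn hFint h hLip hha hhb
end

section
/- Let T > 0 and let Θ be a nonempty set of parameters. For each θ ∈ Θ let λ_θ : ℝ → ℝ be differentiable and strictly positive on [0,T], with measurable score g_θ(t) = λ_θ'(t)/λ_θ(t), and assume the identifiability condition: for all θ₁, θ₂ ∈ Θ, if g_{θ₁} = g_{θ₂} Lebesgue-almost everywhere on [0,T] then θ₁ = θ₂. Fix θ* ∈ Θ with λ_{θ*} additionally continuous on [0,T]. For each N ≥ 1, let S_N = {t ∈ ℝ^N : 0 ≤ t_1 ≤ ⋯ ≤ t_N ≤ T}, let p*_N(t) = (∏_{n=1}^N λ_{θ*}(t_n))·exp(−∫_0^T λ_{θ*}(s) ds), and for each n ∈ {1,…,N} let h_{N,n} : ℝ^N → [0,∞) be measurable with h_{N,n}(t) > 0 for Lebesgue-almost every t ∈ S_N. Define L : Θ → [0,∞] by L(θ) = (1/2)·∑_{N≥1} ∫_{S_N} p*_N(t)·∑_{n=1}^N (g_{θ*}(t_n)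 − g_θ(t_n))²·h_{N,n}(t) dt (integrals of nonnegative measurable functions, possibly infinite). Then L(θ*) = 0 and L(θ) > 0 for every θ ≠ θ*; in particular θ* is the unique minimizer of L over Θ. -/
open MeasureTheory Real Set

/-- identifiability of weighted score matching for Poisson processes:
with a family of strictly positive differentiable model intensities `lam θ` on `[0, T]`
whose scores `t ↦ deriv (lam θ) t / lam θ t` identify the parameter up to a.e. equality
on `[0, T]`, and almost-everywhere-positive weights `h M n`, the explicit weighted
score-matching objective
`L θ = (1/2) ∑_{N ≥ 1} ∫_{S_N} p*_N(t) ∑ₙ (g_{θ*}(tₙ) - g_θ(tₙ))² h_{N,n}(t) dt`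
(a possibly infinite integral of nonnegative functions) has the true parameter `θ*` as
its unique minimizer: `L θ* = 0` and `L θ > 0` for all `θ ≠ θ*`. -/
theorem stmt_16 {Θ : Type*} [Nonempty Θ] (T : ℝ) (hT : 0 < T)
    (lam : Θ → ℝ → ℝ)
    (hdiff : ∀ θ : Θ, ∀ t ∈ Set.Icc (0:ℝ) T, DifferentiableAt ℝ (lam θ) t)
    (hpos : ∀ θ : Θ, ∀ t ∈ Set.Icc (0:ℝ) T, 0 < lam θ t)
    (hscoremeas : ∀ θ : Θ, Measurable fun t => deriv (lam θ) t / lam θ t)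
    (hident : ∀ θ₁ θ₂ : Θ,
      (∀ᵐ t ∂(volume.restrict (Set.Icc (0:ℝ) T)),
        deriv (lam θ₁) t / lam θ₁ t = deriv (lam θ₂) t / lam θ₂ t) → θ₁ = θ₂)
    (θstar : Θ) (hcont : ContinuousOn (lam θstar) (Set.Icc 0 T))
    (h : (M : ℕ) → Fin (M + 1) → (Fin (M + 1) → ℝ) → ℝ)
    (hhmeas : ∀ M n, Measurable (h M n))
    (hhnn : ∀ M n t, 0 ≤ h M n t)
    (hhpos : ∀ M n, ∀ᵐ t ∂(volume.restrict (ordSimplex (M + 1) T)), 0 < h M n t)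
    (L : Θ → ENNReal)
    (hL : L = fun θ => (1/2) * ∑' M : ℕ, ∫⁻ t in ordSimplex (M + 1) T,
      ENNReal.ofReal
        (((∏ n, lam θstar (t n)) * Real.exp (-(∫ s in (0:ℝ)..T, lam θstar s))) *
          ∑ n : Fin (M + 1),
            (deriv (lam θstar) (t n) / lam θstar (t n)
              - deriv (lam θ) (t n) / lam θ (t n))^2 * h M n t)) :
    L θstar = 0 ∧ ∀ θ : Θ, θ ≠ θstar → 0 < L θ := by
  subst hL
  constructor
  · simp
  · intro θ hθ
    rw [pos_iff_ne_zero]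
    intro h0
    apply hθ
    -- tsum is zero
    have htsum : (∑' M : ℕ, ∫⁻ t in ordSimplex (M + 1) T,
        ENNReal.ofReal
          (((∏ n, lam θstar (t n)) * Real.exp (-(∫ s in (0:ℝ)..T, lam θstar s))) *
            ∑ n : Fin (M + 1),
              (deriv (lam θstar) (t n) / lam θstar (t n)
                - deriv (lam θ) (t n) / lam θ (t n))^2 * h M n t)) = 0 := by
      have := mul_eq_zero.mp h0
      rcases this with h' | h'
      · norm_num at h'
      · exact h'
    have hI0 := ENNReal.tsum_eq_zero.mp htsum 0
    -- the simplex for N = 1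
    have hS1 : ordSimplex 1 T = (fun t : Fin 1 → ℝ => t 0) ⁻¹' (Set.Icc 0 T) := by
      ext t
      constructor
      · intro ht; exact ht.2 0
      · intro ht
        refine ⟨fun i j _ => le_of_eq (congrArg t (Subsingleton.elim i j)), fun i => ?_⟩
        have : i = 0 := Subsingleton.elim i 0
        rw [this]; exact ht
    have hS1meas : MeasurableSet (ordSimplex 1 T) := by
      rw [hS1]
      exact measurableSet_Icc.preimage (measurable_pi_apply 0)
    set μ := volume.restrict (ordSimplex 1 T) with hμ
    -- measurability of the integrand at N = 1
    have hlamae : AEMeasurable (fun t : Fin 1 → ℝ => lam θstar (t 0)) μ := by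
      have hc : ContinuousOn (fun t : Fin 1 → ℝ => lam θstar (t 0)) (ordSimplex 1 T) :=
        hcont.comp (continuous_apply (0 : Fin 1)).continuousOn (fun t ht => ht.2 0)
      exact hc.aemeasurable hS1meas
    have hg1 : Measurable (fun t : Fin 1 → ℝ =>
        deriv (lam θstar) (t 0) / lam θstar (t 0)) :=
      (hscoremeas θstar).comp (measurable_pi_apply 0)
    have hg2 : Measurable (fun t : Fin 1 → ℝ =>
        deriv (lam θ) (t 0) / lam θ (t 0)) :=
      (hscoremeas θ).comp (measurable_pi_apply 0)
    have hfae : AEMeasurable (fun t : Fin 1 → ℝ =>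
        ENNReal.ofReal
          (((∏ n, lam θstar (t n)) * Real.exp (-(∫ s in (0:ℝ)..T, lam θstar s))) *
            ∑ n : Fin 1,
              (deriv (lam θstar) (t n) / lam θstar (t n)
                - deriv (lam θ) (t n) / lam θ (t n))^2 * h 0 n t)) μ := by
      apply ENNReal.measurable_ofReal.comp_aemeasurable
      apply AEMeasurable.mul
      · apply AEMeasurable.mul _ aemeasurable_const
        simpa [Fin.prod_univ_one] using hlamae
      · apply Finset.aemeasurable_fun_sum
        intro n _
        have hn : n = 0 := Subsingleton.elim n 0
        subst hn
        exact (((hg1.sub hg2).pow measurable_const).mul (hhmeas 0 0)).aemeasurable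
    rw [lintegral_eq_zero_iff' hfae] at hI0
    have hmem : ∀ᵐ t ∂μ, t ∈ ordSimplex 1 T := ae_restrict_mem hS1meas
    have hhp : ∀ᵐ t ∂μ, 0 < h 0 0 t := hhpos 0 0
    have hA : ∀ᵐ t ∂μ,
        deriv (lam θ) (t 0) / lam θ (t 0)
          = deriv (lam θstar) (t 0) / lam θstar (t 0) := by
      filter_upwards [hI0, hmem, hhp] with t h1 h2 h3
      simp only [Fin.sum_univ_one, Fin.prod_univ_one, Pi.zero_apply,
        ENNReal.ofReal_eq_zero] at h1
      have hlampos : 0 < lam θstar (t 0) := hpos θstar (t 0) (h2.2 0)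
      have hexp : 0 < Real.exp (-(∫ s in (0:ℝ)..T, lam θstar s)) := Real.exp_pos _
      have hsq : (0:ℝ) ≤ (deriv (lam θstar) (t 0) / lam θstar (t 0)
          - deriv (lam θ) (t 0) / lam θ (t 0))^2 := sq_nonneg _
      have hd2 : (deriv (lam θstar) (t 0) / lam θstar (t 0)
          - deriv (lam θ) (t 0) / lam θ (t 0))^2 = 0 := by
        nlinarith [mul_pos hlampos hexp, mul_pos (mul_pos hlampos hexp) h3]
      have := pow_eq_zero_iff (n := 2) (by norm_num) |>.mp hd2
      linarith [sub_eq_zero.mp this]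
    -- transfer to [0, T] ⊆ ℝ via the measurable equivalence (Fin 1 → ℝ) ≃ ℝ
    set e := MeasurableEquiv.funUnique (Fin 1) ℝ with he
    have hmp : MeasurePreserving e volume volume :=
      volume_preserving_funUnique (Fin 1) ℝ
    have hS1e : ordSimplex 1 T = e ⁻¹' (Set.Icc 0 T) := hS1
    have hmp2 : MeasurePreserving e μ (volume.restrict (Set.Icc (0:ℝ) T)) := by
      rw [hμ, hS1e]
      exact hmp.restrict_preimage measurableSet_Icc
    have hmapeq : volume.restrict (Set.Icc (0:ℝ) T) = Measure.map e μ := hmp2.map_eq.symm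
    have hfinal : ∀ᵐ s ∂(volume.restrict (Set.Icc (0:ℝ) T)),
        deriv (lam θ) s / lam θ s = deriv (lam θstar) s / lam θstar s := by
      rw [hmapeq, (e.measurableEmbedding).ae_map_iff]
      simpa [he, MeasurableEquiv.funUnique] using hA
    exact hident θ θstar hfinal
end
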